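/- There is no pair (j,k) of positive integers with j ≥ 1, k ≥ 1 such that j·(arccos(tan²(β/2))/π) + k·(1/5) = m/5 for some integer m with 2 ≤ m ≤ 10, where β = π − arccos(1/√5); i.e., j·L + k·(π/5) ≠ m·(π/5) for the square side length L = arccos(tan²(β/2)) ≈ 0.3752π. -/
import Mathlib

open Real

/-- The angle `β = π - arccos(1/√5) ≈ 116.565°` of the supp-same pentagon. -/
noncomputable def betaPent : ℝ := Real.pi - Real.arccos (1 / Real.sqrt 5)

/-- The side length `L = arccos(tan²((π-β)/2)) ≈ 0.3752π` of the regular spherical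
square of angle `β = π - arccos(1/√5)`. -/
noncomputable def squareSideLen : ℝ := Real.arccos (Real.tan ((Real.pi - betaPent) / 2) ^ 2)

lemma tan_sq_eq : Real.tan ((Real.pi - betaPent) / 2) ^ 2 = (3 - Real.sqrt 5) / 2 := by
  have h5 : Real.sqrt 5 ^ 2 = 5 := Real.sq_sqrt (by norm_num)
  have h5p : (0:ℝ) < Real.sqrt 5 := Real.sqrt_pos.2 (by norm_num)
  have h5g : (1:ℝ) < Real.sqrt 5 := by nlinarith
  have hx0 : (0:ℝ) < 1 / Real.sqrt 5 := by positivity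
  have hx1 : (1:ℝ) / Real.sqrt 5 ≤ 1 := by
    rw [div_le_one h5p]; nlinarith
  set θ := Real.arccos (1 / Real.sqrt 5) with hθ
  have hcos : Real.cos θ = 1 / Real.sqrt 5 := Real.cos_arccos (by linarith) hx1
  have hθ0 : 0 ≤ θ := Real.arccos_nonneg _
  have hθpi : θ ≤ Real.pi := Real.arccos_le_pi _
  have hsimp : (Real.pi - betaPent) / 2 = θ / 2 := by
    rw [one_div] at hθ; simp [betaPent, hθ, one_div]
  rw [hsimp, Real.tan_eq_sin_div_cos, div_pow,
    Real.sin_half_eq_sqrt (by linarith) (by linarith [Real.pi_pos]),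
    Real.cos_half (by linarith [Real.pi_pos]) hθpi,
    Real.sq_sqrt (by rw [hcos]; nlinarith [Real.neg_one_le_cos θ]),
    Real.sq_sqrt (by nlinarith [Real.neg_one_le_cos θ]), hcos]
  rw [div_div_div_eq]
  field_simp
  nlinarith

lemma squareSideLen_eq : squareSideLen = Real.arccos ((3 - Real.sqrt 5) / 2) := by
  rw [squareSideLen, tan_sq_eq]

lemma c_bounds : (0:ℝ) ≤ (3 - Real.sqrt 5) / 2 ∧ (3 - Real.sqrt 5) / 2 ≤ 1 := by
  have h5 : Real.sqrt 5 ^ 2 = 5 := Real.sq_sqrt (by norm_num)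
  have h5p : (0:ℝ) < Real.sqrt 5 := Real.sqrt_pos.2 (by norm_num)
  constructor <;> nlinarith

lemma cos_L : Real.cos squareSideLen = (3 - Real.sqrt 5) / 2 := by
  rw [squareSideLen_eq]
  exact Real.cos_arccos (by linarith [c_bounds.1]) c_bounds.2

lemma L_lower : 3 * Real.pi / 8 < squareSideLen := by
  have h5 : Real.sqrt 5 ^ 2 = 5 := Real.sq_sqrt (by norm_num)
  have h5p : (0:ℝ) < Real.sqrt 5 := Real.sqrt_pos.2 (by norm_num)
  have h2 : Real.sqrt 2 ^ 2 = 2 := Real.sq_sqrt (by norm_num)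
  have h2p : (0:ℝ) < Real.sqrt 2 := Real.sqrt_pos.2 (by norm_num)
  by_contra h
  push_neg at h
  have hcos38 : Real.cos (3 * Real.pi / 8) = Real.sqrt (2 - Real.sqrt 2) / 2 := by
    have : 3 * Real.pi / 8 = Real.pi / 2 - Real.pi / 8 := by ring
    rw [this, Real.cos_pi_div_two_sub, Real.sin_pi_div_eight]
  have hmono : Real.cos (3 * Real.pi / 8) ≤ Real.cos squareSideLen := by
    rcases eq_or_lt_of_le h with h' | h'
    · rw [h']
    · exact (Real.cos_lt_cos_of_nonneg_of_le_pi
        (by rw [squareSideLen_eq]; exact Real.arccos_nonneg _)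
        (by linarith [Real.pi_pos]) h').le
  rw [hcos38, cos_L] at hmono
  -- hmono : √(2 - √2) / 2 ≤ (3 - √5) / 2
  have hkey : (3 - Real.sqrt 5) < Real.sqrt (2 - Real.sqrt 2) := by
    have h30 : (0:ℝ) ≤ 3 - Real.sqrt 5 := by nlinarith
    rw [show (3 - Real.sqrt 5) = Real.sqrt ((3 - Real.sqrt 5)^2) by
      rw [Real.sqrt_sq h30]]
    apply Real.sqrt_lt_sqrt (by positivity)
    -- (3 - √5)^2 < 2 - √2, i.e. 14 - 6√5 < 2 - √2, i.e. 12 + √2 < 6√5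
    nlinarith [sq_nonneg (Real.sqrt 2 - 17/12), sq_nonneg (Real.sqrt 5 - 161/72),
      sq_nonneg (6 * Real.sqrt 5 - 12 - Real.sqrt 2)]
  linarith

lemma L_upper : squareSideLen < 2 * Real.pi / 5 := by
  have h5 : Real.sqrt 5 ^ 2 = 5 := Real.sq_sqrt (by norm_num)
  have h5p : (0:ℝ) < Real.sqrt 5 := Real.sqrt_pos.2 (by norm_num)
  have hcos25 : Real.cos (2 * Real.pi / 5) = (Real.sqrt 5 - 1) / 4 := by
    have : 2 * Real.pi / 5 = 2 * (Real.pi / 5) := by ring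
    rw [this, Real.cos_two_mul, Real.cos_pi_div_five]
    nlinarith
  by_contra h
  push_neg at h
  have hmono : Real.cos squareSideLen ≤ Real.cos (2 * Real.pi / 5) := by
    rcases eq_or_lt_of_le h with h' | h'
    · rw [← h']
    · refine (Real.cos_lt_cos_of_nonneg_of_le_pi (by positivity)
        ((squareSideLen_eq ▸ Real.arccos_le_pi _)) h').le
  rw [hcos25, cos_L] at hmono
  nlinarith

/-- No combination `j·L + k·(π/5)` with `j, k ≥ 1` equals `m·(π/5)` for an integer
`2 ≤ m ≤ 10`, where `L ≈ 0.3752π` is the side length of the square of angle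
`π - arccos(1/√5)`. -/
theorem no_perfect_fit_combination :
    ∀ j k m : ℕ, 1 ≤ j → 1 ≤ k → 2 ≤ m → m ≤ 10 →
      (j : ℝ) * squareSideLen + (k : ℝ) * (Real.pi / 5) ≠ (m : ℝ) * (Real.pi / 5) := by
  intro j k m hj hk hm2 hm10 heq
  have hpi := Real.pi_pos
  have hLlo := L_lower
  have hLhi := L_upper
  have hjR : (1:ℝ) ≤ (j:ℝ) := by exact_mod_cast hj
  have hjL : (j:ℝ) * squareSideLen = ((m:ℝ) - k) * (Real.pi / 5) := by linarith
  have hlow : (j:ℝ) * (3 * Real.pi / 8) < ((m:ℝ) - k) * (Real.pi / 5) := by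
    rw [← hjL]
    have : (0:ℝ) < (j:ℝ) := by linarith
    nlinarith
  have hhigh : ((m:ℝ) - k) * (Real.pi / 5) < (j:ℝ) * (2 * Real.pi / 5) := by
    rw [← hjL]
    have : (0:ℝ) < (j:ℝ) := by linarith
    nlinarith
  -- multiply out by 40/π
  have h1 : (15 * j : ℝ) < 8 * ((m:ℝ) - k) := by nlinarith
  have h2 : (8 * ((m:ℝ) - k)) < 16 * j := by nlinarith
  have h1' : (15 * j : ℤ) < 8 * ((m:ℤ) - k) := by exact_mod_cast (by push_cast; linarith : (15 * (j:ℤ) : ℝ) < 8 * ((m:ℤ) - (k:ℤ)))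
  have h2' : (8 * ((m:ℤ) - k) : ℤ) < 16 * j := by exact_mod_cast (by push_cast; linarith : ((8 * ((m:ℤ) - (k:ℤ)) : ℤ) : ℝ) < 16 * (j:ℤ))
  have hm10' : (m:ℤ) ≤ 10 := by exact_mod_cast hm10
  have hk' : (1:ℤ) ≤ k := by exact_mod_cast hk
  have hj' : (1:ℤ) ≤ j := by exact_mod_cast hj
  omega
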